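/- For real square matrices, if A(n) and B(n) are symmetric matrices with ‖A(n) − B(n)‖_op = O(n^{−2}), then lim_{n→∞} ‖A(n)‖_op^n exists if lim_{n→∞} ‖B(n)‖_op^n does and the limits coincide. In particular, for fixed symmetric M and matrix D, lim_{n→∞} ‖e^{−M/n}(I − D/n)‖_op^n = ‖e^{−(M+D)}‖_op whenever M + D is symmetric. -/

import Mathlib

/-
Since `|‖A‖ - ‖B‖| ≤ ‖A - B‖`, the first claim is one about real sequences: if `|aₙ - bₙ| ≤ c/n²`
and `bₙⁿ` converges, then `|aₙⁿ - bₙⁿ| ≤ n · mₙⁿ⁻¹ · c/n²` with `mₙ = max(|aₙ|, |bₙ|)`, and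
`mₙⁿ⁻¹ ≤ max(|bₙ|ⁿ, 1) · eᶜ` stays bounded because `mₙ ≤ max(|bₙ|, 1) · (1 + c/n²)` and
`(1 + c/n²)ⁿ ≤ eᶜ`; so `aₙⁿ - bₙⁿ = O(1/n)`.
For the second claim take `B(n) = e^{-(M+D)/n}`. Comparing second-order expansions of the two
exponentials gives `‖e^{-M/n}(I - D/n) - B(n)‖ = O(n⁻²)`, and since `B(n)` is symmetric,
`‖B(n)‖ⁿ = ‖B(n)ⁿ‖ = ‖e^{-(M+D)}‖` for every `n ≥ 1`.
-/

open Matrix Filter Topology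

/-- The Euclidean operator norm of a real matrix. -/
noncomputable def opNorm {V : Type*} [Fintype V] [DecidableEq V] (A : Matrix V V ℝ) : ℝ :=
  ‖LinearMap.toContinuousLinearMap (Matrix.toEuclideanLin A)‖

/-- The matrix exponential. -/
noncomputable def mexp {V : Type*} [Fintype V] [DecidableEq V] (A : Matrix V V ℝ) :
    Matrix V V ℝ :=
  NormedSpace.exp A

lemma pow_le_max_pow_one_mul_exp {x y d c : ℝ} {k n : ℕ} (hx : 0 ≤ x) (hd : 0 ≤ d)
    (hxy : x ≤ y + d) (hkn : k ≤ n) (hnd : n * d ≤ c) :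
    x ^ k ≤ max (y ^ n) 1 * Real.exp c := by
  have hy₁ : 1 ≤ max y 1 := le_max_right y 1
  have hx_le : x ≤ max y 1 * (1 + d) := by nlinarith [le_max_left y 1]
  have hmax : max y 1 ^ n ≤ max (y ^ n) 1 := by
    rcases le_total y 1 with hy | hy
    · simp [max_eq_right hy]
    · simp [max_eq_left hy]
  have hgrowth : (1 + d) ^ n ≤ Real.exp c := calc
    (1 + d) ^ n ≤ Real.exp d ^ n := by gcongr; linarith [Real.add_one_le_exp d]
    _ = Real.exp (n * d) := (Real.exp_nat_mul d n).symm
    _ ≤ Real.exp c := Real.exp_le_exp.mpr hnd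
  calc x ^ k ≤ (max y 1 * (1 + d)) ^ k := by gcongr
    _ ≤ (max y 1 * (1 + d)) ^ n :=
      pow_le_pow_right₀ (one_le_mul_of_one_le_of_one_le hy₁ (by linarith)) hkn
    _ = max y 1 ^ n * (1 + d) ^ n := mul_pow _ _ n
    _ ≤ max (y ^ n) 1 * Real.exp c := by gcongr

lemma tendsto_pow_sub_pow_of_abs_sub_le {a b : ℕ → ℝ} {c B : ℝ}
    (hab : ∀ᶠ n : ℕ in atTop, |a n - b n| ≤ c / (n : ℝ) ^ 2)
    (hb : ∀ᶠ n : ℕ in atTop, |b n ^ n| ≤ B) :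
    Tendsto (fun n : ℕ => a n ^ n - b n ^ n) atTop (𝓝 0) := by
  set K := max B 1 * Real.exp c
  refine squeeze_zero_norm' ?_ (by simpa using tendsto_const_div_atTop_nhds_zero_nat (c * K))
  filter_upwards [hab, hb, eventually_ge_atTop 1] with n hab hb hn
  have hd : 0 ≤ c / (n : ℝ) ^ 2 := (abs_nonneg _).trans hab
  have hnd : n * (c / (n : ℝ) ^ 2) ≤ c := by
    calc n * (c / (n : ℝ) ^ 2) ≤ (n : ℝ) ^ 2 * (c / (n : ℝ) ^ 2) := by
          gcongr; nlinarith [(by exact_mod_cast hn : (1 : ℝ) ≤ n)]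
      _ = c := by field_simp
  have hmax : max |a n| |b n| ^ (n - 1) ≤ K := calc
    max |a n| |b n| ^ (n - 1) ≤ max (|b n| ^ n) 1 * Real.exp c := by
      refine pow_le_max_pow_one_mul_exp (le_max_of_le_left (abs_nonneg _)) hd
        (max_le ?_ (le_add_of_nonneg_right hd)) (Nat.sub_le n 1) hnd
      linarith [abs_sub_abs_le_abs_sub (a n) (b n)]
    _ ≤ max B 1 * Real.exp c := by rw [← abs_pow]; gcongr
  calc ‖a n ^ n - b n ^ n‖ ≤ |a n - b n| * n * max |a n| |b n| ^ (n - 1) :=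
        abs_pow_sub_pow_le _ _ _
    _ ≤ c / (n : ℝ) ^ 2 * n * K := by gcongr
    _ = c * K / n := by field_simp

lemma Filter.Tendsto.pow_self_of_abs_sub_le {a b : ℕ → ℝ} {c L : ℝ}
    (hab : ∀ᶠ n : ℕ in atTop, |a n - b n| ≤ c / (n : ℝ) ^ 2)
    (hb : Tendsto (fun n : ℕ => b n ^ n) atTop (𝓝 L)) :
    Tendsto (fun n : ℕ => a n ^ n) atTop (𝓝 L) := by
  have hbounded : ∀ᶠ n : ℕ in atTop, |b n ^ n| ≤ |L| + 1 :=
    hb.abs.eventually (eventually_le_nhds (lt_add_one _))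
  simpa using (tendsto_pow_sub_pow_of_abs_sub_le hab hbounded).add hb

lemma IsSelfAdjoint.norm_pow {E : Type*} [NormedRing E] [StarRing E] [CStarRing E] {x : E}
    (hx : IsSelfAdjoint x) {n : ℕ} (hn : n ≠ 0) :
    ‖x ^ n‖ = ‖x‖ ^ n := by
  refine le_antisymm (norm_pow_le' x (Nat.pos_of_ne_zero hn)) ?_
  obtain hzero | hpos := (norm_nonneg x).eq_or_lt
  · rw [← hzero, zero_pow hn]
    exact norm_nonneg _
  have hlt : n < 2 ^ n := Nat.lt_two_pow_self
  have hsplit : n + (2 ^ n - n) = 2 ^ n := Nat.add_sub_cancel' hlt.le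
  -- the C*-identity gives the claim for `2 ^ n`; cancel the surplus factor `‖x‖ ^ (2 ^ n - n)`
  refine le_of_mul_le_mul_right ?_ (pow_pos hpos (2 ^ n - n))
  calc ‖x‖ ^ n * ‖x‖ ^ (2 ^ n - n) = ‖x ^ 2 ^ n‖ := by
        rw [← pow_add, hsplit, hx.norm_pow_two_pow]
    _ = ‖x ^ n * x ^ (2 ^ n - n)‖ := by rw [← pow_add, hsplit]
    _ ≤ ‖x ^ n‖ * ‖x‖ ^ (2 ^ n - n) :=
      (norm_mul_le _ _).trans (by gcongr; exact norm_pow_le' x (Nat.sub_pos_of_lt hlt))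

section BanachAlgebra

open NormedSpace Nat

variable {𝔸 : Type*} [NormedRing 𝔸] [NormedAlgebra ℝ 𝔸] [CompleteSpace 𝔸]

lemma norm_exp_sub_one_sub_le (x : 𝔸) : ‖exp x - 1 - x‖ ≤ ‖x‖ ^ 2 * Real.exp ‖x‖ := by
  set f : ℕ → 𝔸 := fun n => ((n ! : ℝ))⁻¹ • x ^ n
  have htail : HasSum (fun n => f (n + 2)) (exp x - 1 - x) := by
    have := (hasSum_nat_add_iff' 2).mpr (exp_series_hasSum_exp' (𝕂 := ℝ) x)
    simpa [f, Finset.sum_range_succ, sub_sub] using this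
  have hexp : HasSum (fun n => ‖x‖ ^ 2 * (‖x‖ ^ n / n !)) (‖x‖ ^ 2 * Real.exp ‖x‖) := by
    rw [Real.exp_eq_exp_ℝ]
    exact (expSeries_div_hasSum_exp ‖x‖).mul_left _
  refine htail.norm_le_of_bounded hexp fun n => ?_
  calc ‖f (n + 2)‖ ≤ ((n + 2)! : ℝ)⁻¹ * ‖x‖ ^ (n + 2) := by
        rw [norm_smul, Real.norm_of_nonneg (by positivity)]
        gcongr
        exact norm_pow_le' x (by omega)
    _ ≤ (n ! : ℝ)⁻¹ * ‖x‖ ^ (n + 2) := by gcongr; omega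
    _ = ‖x‖ ^ 2 * (‖x‖ ^ n / n !) := by ring

lemma norm_exp_mul_one_add_sub_exp_add_le (x y : 𝔸) :
    ‖exp x * (1 + y) - exp (x + y)‖ ≤
      ‖x‖ ^ 2 * Real.exp ‖x‖ * ‖1 + y‖ + ‖x‖ * ‖y‖ + ‖x + y‖ ^ 2 * Real.exp ‖x + y‖ := by
  have hsplit : exp x * (1 + y) - exp (x + y) =
      (exp x - 1 - x) * (1 + y) + x * y - (exp (x + y) - 1 - (x + y)) := by noncomm_ring
  rw [hsplit]
  refine (norm_sub_le _ _).trans (add_le_add ((norm_add_le _ _).trans (add_le_add ?_ ?_)) ?_)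
  · exact (norm_mul_le _ _).trans (by gcongr; exact norm_exp_sub_one_sub_le x)
  · exact norm_mul_le x y
  · exact norm_exp_sub_one_sub_le (x + y)

lemma exists_norm_exp_neg_smul_mul_one_sub_sub_le (M D : 𝔸) : ∃ C, ∀ t : ℝ, 0 ≤ t → t ≤ 1 →
    ‖exp (-(t • M)) * (1 - t • D) - exp (-(t • (M + D)))‖ ≤ C * t ^ 2 := by
  refine ⟨‖M‖ ^ 2 * Real.exp ‖M‖ * (‖(1 : 𝔸)‖ + ‖D‖) + ‖M‖ * ‖D‖ +
    ‖M + D‖ ^ 2 * Real.exp ‖M + D‖, fun t ht₀ ht₁ => ?_⟩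
  have hnorm (X : 𝔸) : ‖-(t • X)‖ = t * ‖X‖ := by
    rw [norm_neg, norm_smul, Real.norm_of_nonneg ht₀]
  have hshrink (X : 𝔸) : t * ‖X‖ ≤ ‖X‖ := mul_le_of_le_one_left (norm_nonneg X) ht₁
  have hone : ‖1 - t • D‖ ≤ ‖(1 : 𝔸)‖ + ‖D‖ := by
    rw [sub_eq_add_neg]
    exact (norm_add_le _ _).trans (by rw [hnorm]; gcongr; exact hshrink D)
  have h := norm_exp_mul_one_add_sub_exp_add_le (-(t • M)) (-(t • D))
  rw [← sub_eq_add_neg, ← neg_add, ← smul_add, hnorm, hnorm, hnorm] at h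
  calc _ ≤ _ := h
    _ ≤ (t * ‖M‖) ^ 2 * Real.exp ‖M‖ * (‖(1 : 𝔸)‖ + ‖D‖) + t * ‖M‖ * (t * ‖D‖) +
          (t * ‖M + D‖) ^ 2 * Real.exp ‖M + D‖ := by
      gcongr
      exacts [hshrink M, hshrink (M + D)]
    _ = _ := by ring

section SelfAdjoint

variable [StarRing 𝔸] [CStarRing 𝔸]

lemma IsSelfAdjoint.norm_exp_inv_smul_pow [StarModule ℝ 𝔸] {x : 𝔸} (hx : IsSelfAdjoint x)
    {n : ℕ} (hn : n ≠ 0) : ‖NormedSpace.exp ((n : ℝ)⁻¹ • x)‖ ^ n = ‖NormedSpace.exp x‖ := by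
  -- `NormedSpace.exp_nsmul` is stated for `ℚ`-algebras
  let : NormedAlgebra ℚ 𝔸 := NormedAlgebra.restrictScalars ℚ ℝ 𝔸
  rw [← ((IsSelfAdjoint.all (n : ℝ)⁻¹).smul hx).exp.norm_pow hn, ← NormedSpace.exp_nsmul,
    ← Nat.cast_smul_eq_nsmul ℝ, smul_smul, mul_inv_cancel₀ (by exact_mod_cast hn), one_smul]

end SelfAdjoint

end BanachAlgebra

open scoped Matrix.Norms.L2Operator in
theorem stmt17_general {V : Type*} [Fintype V] [DecidableEq V]
    (A B : ℕ → Matrix V V ℝ)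
    (c : ℝ) (hc : ∀ n : ℕ, 1 ≤ n → opNorm (A n - B n) ≤ c / (n : ℝ) ^ 2) :
    (∀ L : ℝ, Tendsto (fun n : ℕ => opNorm (B n) ^ n) atTop (𝓝 L) →
        Tendsto (fun n : ℕ => opNorm (A n) ^ n) atTop (𝓝 L)) ∧
    (∀ M D : Matrix V V ℝ, M.IsSymm → (M + D).IsSymm →
        Tendsto
          (fun n : ℕ =>
            opNorm (mexp (-((1 / (n : ℝ)) • M)) * (1 - (1 / (n : ℝ)) • D)) ^ n)
          atTop (𝓝 (opNorm (mexp (-(M + D)))))) := by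
  refine ⟨fun L hL => hL.pow_self_of_abs_sub_le <| eventually_atTop.2
    ⟨1, fun n hn => (abs_norm_sub_norm_le (A n) (B n)).trans (hc n hn)⟩, fun M D _ hMD => ?_⟩
  have hsa : IsSelfAdjoint (-(M + D)) := (isHermitian_iff_isSymm.mpr hMD).neg
  have hconst : Tendsto (fun n : ℕ => opNorm (mexp (-((1 / (n : ℝ)) • (M + D)))) ^ n) atTop
      (𝓝 (opNorm (mexp (-(M + D))))) :=
    tendsto_const_nhds.congr' <| eventually_atTop.2 ⟨1, fun n hn => by
      dsimp only
      rw [one_div, ← smul_neg]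
      exact (hsa.norm_exp_inv_smul_pow (by omega)).symm⟩
  obtain ⟨C, hC⟩ := exists_norm_exp_neg_smul_mul_one_sub_sub_le M D
  refine hconst.pow_self_of_abs_sub_le (c := C) <| eventually_atTop.2 ⟨1, fun n hn => ?_⟩
  have hn' : (1 : ℝ) ≤ n := by exact_mod_cast hn
  calc _ ≤ _ := abs_norm_sub_norm_le _ _
    _ ≤ C * (1 / (n : ℝ)) ^ 2 := hC _ (by positivity) (div_le_one_of_le₀ hn' (by positivity))
    _ = C / (n : ℝ) ^ 2 := by ring

theorem stmt17 {V : Type*} [Fintype V] [DecidableEq V]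
    (A B : ℕ → Matrix V V ℝ) (hA : ∀ n, (A n).IsSymm) (hB : ∀ n, (B n).IsSymm)
    (c : ℝ) (hc : ∀ n : ℕ, 1 ≤ n → opNorm (A n - B n) ≤ c / (n : ℝ) ^ 2) :
    (∀ L : ℝ, Tendsto (fun n : ℕ => opNorm (B n) ^ n) atTop (𝓝 L) →
        Tendsto (fun n : ℕ => opNorm (A n) ^ n) atTop (𝓝 L)) ∧
    (∀ M D : Matrix V V ℝ, M.IsSymm → (M + D).IsSymm →
        Tendsto
          (fun n : ℕ =>
            opNorm (mexp (-((1 / (n : ℝ)) • M)) * (1 - (1 / (n : ℝ)) • D)) ^ n)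
          atTop (𝓝 (opNorm (mexp (-(M + D)))))) :=
  stmt17_general A B c hc
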